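/- arXiv:1403.5834 — 2 statements merged into one kernel-verified Lean document; each statement's English description precedes it below -/
import Mathlib

section
/- Contraction property of the doubly penalized equation: fix ε, δ > 0 and let v, v̂ : D̄ → ℝ be continuous with v = v̂ = 0 on ∂D. If z^{ε,δ} is a classical solution of the penalized problem with data v and ẑ^{ε,δ} is a classical solution of the penalized problem with data v̂, then sup_{x∈D} |z^{ε,δ}(x) − ẑ^{ε,δ}(x)| ≤ sup_{x∈D} |v(x) − v̂(x)|. -/
open MeasureTheory Set

/-- The Laplacian of a function on `EuclideanSpace ℝ (Fin k)`, as the sum of the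
second partial derivatives in the coordinate directions. -/
noncomputable def lap {k : ℕ} (φ : EuclideanSpace ℝ (Fin k) → ℝ)
    (x : EuclideanSpace ℝ (Fin k)) : ℝ :=
  ∑ i : Fin k,
    fderiv ℝ (fun y => fderiv ℝ φ y (EuclideanSpace.single i 1)) x (EuclideanSpace.single i 1)

/-- Condition (F1): `f` is locally bounded on `D × ℝ`, continuous on `D × ℝ`, and
nondecreasing in its second variable. -/
def SatisfiesF1 {k : ℕ} (D : Set (EuclideanSpace ℝ (Fin k)))
    (f : EuclideanSpace ℝ (Fin k) → ℝ → ℝ) : Prop :=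
  ContinuousOn (fun p : EuclideanSpace ℝ (Fin k) × ℝ => f p.1 p.2) (D ×ˢ univ) ∧
  (∀ K : Set (EuclideanSpace ℝ (Fin k) × ℝ), IsCompact K → K ⊆ D ×ˢ univ →
    BddAbove ((fun p : EuclideanSpace ℝ (Fin k) × ℝ => |f p.1 p.2|) '' K)) ∧
  (∀ x ∈ D, Monotone (f x))

/-- `φ` is a test function on `D`: infinitely differentiable with compact support
contained in `D`. -/
def IsTestFunction {k : ℕ} (D : Set (EuclideanSpace ℝ (Fin k)))
    (φ : EuclideanSpace ℝ (Fin k) → ℝ) : Prop :=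
  ContDiff ℝ (⊤ : ℕ∞) φ ∧ HasCompactSupport φ ∧ tsupport φ ⊆ D

/-- `z` is a classical solution of the doubly penalized problem with data `v`:
`z` is continuous on `D̄`, C² in `D`, vanishes on `∂D`, and satisfies
`−Δz + f(z+v) = (1/δ)(z+v−h¹)⁻ − (1/ε)(z+v−h²)⁺` in `D`. -/
def IsPenalizedSolution {k : ℕ} (D : Set (EuclideanSpace ℝ (Fin k)))
    (f : EuclideanSpace ℝ (Fin k) → ℝ → ℝ)
    (h₁ h₂ : EuclideanSpace ℝ (Fin k) → ℝ) (ε δ : ℝ)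
    (v z : EuclideanSpace ℝ (Fin k) → ℝ) : Prop :=
  ContinuousOn z (closure D) ∧ (∀ x ∈ D, ContDiffAt ℝ 2 z x) ∧
  (∀ x ∈ frontier D, z x = 0) ∧
  (∀ x ∈ D, -lap z x + f x (z x + v x)
      = (1 / δ) * max (-(z x + v x - h₁ x)) 0 - (1 / ε) * max (z x + v x - h₂ x) 0)


open Filter Topology


/-- Second derivative test at a local maximum (one dimension). -/
lemma deriv2_nonpos_of_isLocalMax {g : ℝ → ℝ} {t₀ : ℝ}
    (hdiff : ∀ᶠ t in 𝓝 t₀, DifferentiableAt ℝ g t)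
    (hd2 : DifferentiableAt ℝ (deriv g) t₀)
    (hmax : IsLocalMax g t₀) :
    deriv (deriv g) t₀ ≤ 0 := by
  by_contra hcon
  push_neg at hcon
  have hd0 : deriv g t₀ = 0 := hmax.deriv_eq_zero
  have hslope : Tendsto (slope (deriv g) t₀) (𝓝[≠] t₀) (𝓝 (deriv (deriv g) t₀)) :=
    hasDerivAt_iff_tendsto_slope.mp hd2.hasDerivAt
  have h1 : ∀ᶠ t in 𝓝[>] t₀, 0 < slope (deriv g) t₀ t :=
    (hslope.eventually (eventually_gt_nhds hcon)).filter_mono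
      (nhdsWithin_mono t₀ (fun t ht => ne_of_gt ht))
  have hpos : ∀ᶠ t in 𝓝[>] t₀, 0 < deriv g t := by
    filter_upwards [h1, self_mem_nhdsWithin] with t ht ht'
    have h2 : (0:ℝ) < t - t₀ := sub_pos.2 ht'
    have h3 := ht
    rw [slope_def_field] at h3
    rw [hd0, sub_zero] at h3
    have := mul_pos h3 h2
    rwa [div_mul_cancel₀ _ h2.ne'] at this
  obtain ⟨b, hb, hIoc⟩ := mem_nhdsGT_iff_exists_Ioc_subset.1 hpos
  obtain ⟨r, hr, hball⟩ := Metric.eventually_nhds_iff_ball.1 (hdiff.and hmax)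
  set c := min b (t₀ + r/2) with hc'
  have hct : t₀ < c := lt_min hb (by linarith)
  have hsub : Icc t₀ c ⊆ Metric.ball t₀ r := by
    intro t ht
    rw [Metric.mem_ball, Real.dist_eq, abs_sub_lt_iff]
    have h4 : t ≤ t₀ + r/2 := le_trans ht.2 (min_le_right _ _)
    exact ⟨by linarith [ht.1], by linarith [ht.1]⟩
  have hmono : StrictMonoOn g (Icc t₀ c) := by
    apply strictMonoOn_of_deriv_pos (convex_Icc _ _)
    · exact fun t ht => ((hball _ (hsub ht)).1).continuousAt.continuousWithinAt
    · intro t ht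
      rw [interior_Icc] at ht
      exact hIoc ⟨ht.1, le_trans ht.2.le (min_le_left _ _)⟩
  have hlt : g t₀ < g c := hmono (left_mem_Icc.2 hct.le) (right_mem_Icc.2 hct.le) hct
  have hle : g c ≤ g t₀ := (hball _ (hsub (right_mem_Icc.2 hct.le))).2
  linarith

/-- Second directional derivative test at a local maximum. -/
lemma fderiv2_dir_nonpos {k : ℕ} {h : EuclideanSpace ℝ (Fin k) → ℝ}
    {y : EuclideanSpace ℝ (Fin k)} {U : Set (EuclideanSpace ℝ (Fin k))}
    (hU : IsOpen U) (hyU : y ∈ U) (hh : ∀ x ∈ U, ContDiffAt ℝ 2 h x)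
    (hmax : IsLocalMax h y) (e : EuclideanSpace ℝ (Fin k)) :
    fderiv ℝ (fun x => fderiv ℝ h x e) y e ≤ 0 := by
  set L : ℝ → EuclideanSpace ℝ (Fin k) := fun t => y + t • e with hL
  have hLd : ∀ t, HasDerivAt L e t := by
    intro t
    have h1 : HasDerivAt (fun s : ℝ => s • e) ((1:ℝ) • e) t := (hasDerivAt_id t).smul_const e
    rw [one_smul] at h1
    exact h1.const_add y
  have hL0 : L 0 = y := by simp [hL]
  have hLc : Continuous L := continuous_const.add (continuous_id.smul continuous_const)
  set g : ℝ → ℝ := fun t => h (L t) with hg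
  have hmem : ∀ᶠ t in 𝓝 0, L t ∈ U := by
    have : Tendsto L (𝓝 0) (𝓝 y) := by
      have := hLc.continuousAt (x := (0:ℝ))
      rwa [ContinuousAt, hL0] at this
    exact this.eventually (hU.eventually_mem hyU)
  have hgmax : IsLocalMax g 0 := by
    have hT : Tendsto L (𝓝 0) (𝓝 y) := by
      have := hLc.continuousAt (x := (0:ℝ))
      rwa [ContinuousAt, hL0] at this
    have hmax' : IsMaxFilter h (𝓝 y) (L 0) := by rw [hL0]; exact hmax
    exact hmax'.comp_tendsto hT
  set F : EuclideanSpace ℝ (Fin k) → ℝ := fun x => fderiv ℝ h x e with hF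
  have hderiv_g : ∀ᶠ t in 𝓝 0, HasDerivAt g (F (L t)) t := by
    filter_upwards [hmem] with t ht
    exact (((hh _ ht).differentiableAt two_ne_zero).hasFDerivAt).comp_hasDerivAt t (hLd t)
  have hderiv_eq : deriv g =ᶠ[𝓝 0] fun t => F (L t) := by
    filter_upwards [hderiv_g] with t ht using ht.deriv
  have hFd : DifferentiableAt ℝ F y := by
    have h1 : ContDiffAt ℝ 1 (fderiv ℝ h) y := (hh y hyU).fderiv_right (by norm_num)
    exact (h1.differentiableAt one_ne_zero).clm_apply (differentiableAt_const e)
  have hFL : HasDerivAt (fun t => F (L t)) (fderiv ℝ F y e) 0 := by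
    have hFd' : HasFDerivAt F (fderiv ℝ F y) (L 0) := by rw [hL0]; exact hFd.hasFDerivAt
    exact hFd'.comp_hasDerivAt 0 (hLd 0)
  have hdd : deriv (deriv g) 0 = fderiv ℝ F y e := by
    rw [hderiv_eq.deriv_eq, hFL.deriv]
  have hdiff : ∀ᶠ t in 𝓝 0, DifferentiableAt ℝ g t := by
    filter_upwards [hderiv_g] with t ht using ht.differentiableAt
  have hd2 : DifferentiableAt ℝ (deriv g) 0 := by
    rw [hderiv_eq.differentiableAt_iff]
    exact hFL.differentiableAt
  have := deriv2_nonpos_of_isLocalMax hdiff hd2 hgmax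
  rwa [hdd] at this

lemma lap_nonpos_of_isLocalMax {k : ℕ} {h : EuclideanSpace ℝ (Fin k) → ℝ}
    {y : EuclideanSpace ℝ (Fin k)} {U : Set (EuclideanSpace ℝ (Fin k))}
    (hU : IsOpen U) (hyU : y ∈ U) (hh : ∀ x ∈ U, ContDiffAt ℝ 2 h x)
    (hmax : IsLocalMax h y) : lap h y ≤ 0 :=
  Finset.sum_nonpos fun i _ => fderiv2_dir_nonpos hU hyU hh hmax _

/-- derivative of the squared-norm-like function. -/
lemma q_hasFDerivAt {k : ℕ} (y : EuclideanSpace ℝ (Fin k)) :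
    HasFDerivAt (fun w : EuclideanSpace ℝ (Fin k) => ∑ j, (w j)^2)
      (∑ j, (2 * y j) • (EuclideanSpace.proj j (𝕜 := ℝ))) y := by
  have h : ∀ j ∈ Finset.univ, HasFDerivAt (fun w : EuclideanSpace ℝ (Fin k) => (w j)^2)
      ((2 * y j) • (EuclideanSpace.proj j (𝕜 := ℝ))) y := by
    intro j _
    have h1 : HasFDerivAt (fun w : EuclideanSpace ℝ (Fin k) => w j)
        (EuclideanSpace.proj j (𝕜 := ℝ)) y := (EuclideanSpace.proj (𝕜 := ℝ) j).hasFDerivAt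
    have h2 := h1.fun_mul h1
    have : (fun w : EuclideanSpace ℝ (Fin k) => w j * w j)
        = fun w : EuclideanSpace ℝ (Fin k) => (w j)^2 := by
      funext w; ring
    rw [this] at h2
    refine h2.congr_fderiv ?_
    ext w
    simp [two_mul, add_smul]
  exact HasFDerivAt.fun_sum h

lemma q_contDiff {k : ℕ} : ContDiff ℝ 2 (fun w : EuclideanSpace ℝ (Fin k) => ∑ j, (w j)^2) := by
  apply ContDiff.sum
  intro j _
  exact (EuclideanSpace.proj (𝕜 := ℝ) j).contDiff.pow 2

lemma q_fderiv_single {k : ℕ} (y : EuclideanSpace ℝ (Fin k)) (i : Fin k) :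
    (∑ j, (2 * y j) • (EuclideanSpace.proj j (𝕜 := ℝ))) (EuclideanSpace.single i 1)
      = 2 * y i := by
  rw [ContinuousLinearMap.sum_apply]
  have : ∀ j, ((2 * y j) • (EuclideanSpace.proj j (𝕜 := ℝ))) (EuclideanSpace.single i 1)
      = (2 * y j) * (if j = i then 1 else 0) := by
    intro j
    simp [EuclideanSpace.single_apply]
  simp only [this]
  simp [Finset.sum_ite_eq', mul_ite]

lemma lap_comb {k : ℕ} {z z' : EuclideanSpace ℝ (Fin k) → ℝ} {σ : ℝ}
    {U : Set (EuclideanSpace ℝ (Fin k))} (hU : IsOpen U)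
    (hz : ∀ y ∈ U, ContDiffAt ℝ 2 z y) (hz' : ∀ y ∈ U, ContDiffAt ℝ 2 z' y)
    {x : EuclideanSpace ℝ (Fin k)} (hx : x ∈ U) :
    lap (fun y => z y - z' y + σ * ∑ j, (y j)^2) x
      = lap z x - lap z' x + σ * (2 * k) := by
  unfold lap
  have hmain : ∀ i : Fin k,
      fderiv ℝ (fun y => fderiv ℝ (fun w => z w - z' w + σ * ∑ j, (w j)^2) y
        (EuclideanSpace.single i 1)) x (EuclideanSpace.single i 1)
      = fderiv ℝ (fun y => fderiv ℝ z y (EuclideanSpace.single i 1)) x (EuclideanSpace.single i 1)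
        - fderiv ℝ (fun y => fderiv ℝ z' y (EuclideanSpace.single i 1)) x
            (EuclideanSpace.single i 1) + σ * 2 := by
    intro i
    set e := EuclideanSpace.single (𝕜 := ℝ) i 1 with he
    -- inner derivative formula, valid on U
    have hinner : ∀ y ∈ U,
        fderiv ℝ (fun w => z w - z' w + σ * ∑ j, (w j)^2) y e
          = fderiv ℝ z y e - fderiv ℝ z' y e + σ * (2 * y i) := by
      intro y hy
      have hzd := ((hz y hy).differentiableAt two_ne_zero).hasFDerivAt
      have hz'd := ((hz' y hy).differentiableAt two_ne_zero).hasFDerivAt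
      have hqd := (q_hasFDerivAt y).const_mul σ
      have H := (hzd.fun_sub hz'd).fun_add hqd
      rw [H.fderiv]
      simp only [ContinuousLinearMap.add_apply, ContinuousLinearMap.sub_apply,
        ContinuousLinearMap.coe_smul', Pi.smul_apply, smul_eq_mul]
      rw [q_fderiv_single]
    have hEq : (fun y => fderiv ℝ (fun w => z w - z' w + σ * ∑ j, (w j)^2) y e)
        =ᶠ[𝓝 x] fun y => fderiv ℝ z y e - fderiv ℝ z' y e + σ * (2 * y i) := by
      filter_upwards [hU.mem_nhds hx] with y hy using hinner y hy
    rw [hEq.fderiv_eq]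
    -- differentiability of the three pieces
    have hFz : DifferentiableAt ℝ (fun y => fderiv ℝ z y e) x :=
      (((hz x hx).fderiv_right (m := 1) (by norm_num)).differentiableAt one_ne_zero).clm_apply
        (differentiableAt_const e)
    have hFz' : DifferentiableAt ℝ (fun y => fderiv ℝ z' y e) x :=
      (((hz' x hx).fderiv_right (m := 1) (by norm_num)).differentiableAt one_ne_zero).clm_apply
        (differentiableAt_const e)
    have hlin : HasFDerivAt (fun y : EuclideanSpace ℝ (Fin k) => σ * (2 * y i))
        (σ • ((2:ℝ) • (EuclideanSpace.proj i (𝕜 := ℝ)))) x := by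
      have h1 : HasFDerivAt (fun w : EuclideanSpace ℝ (Fin k) => w i)
          (EuclideanSpace.proj i (𝕜 := ℝ)) x := (EuclideanSpace.proj (𝕜 := ℝ) i).hasFDerivAt
      exact (h1.const_mul 2).const_mul σ
    have H2 := (hFz.hasFDerivAt.fun_sub hFz'.hasFDerivAt).fun_add hlin
    rw [H2.fderiv]
    simp only [ContinuousLinearMap.add_apply, ContinuousLinearMap.sub_apply,
      ContinuousLinearMap.coe_smul', Pi.smul_apply, smul_eq_mul]
    have : (EuclideanSpace.proj i (𝕜 := ℝ)) e = 1 := by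
      simp [he, EuclideanSpace.single_apply]
    rw [this]
    ring
  rw [Finset.sum_congr rfl (fun i _ => hmain i)]
  rw [Finset.sum_add_distrib, Finset.sum_sub_distrib, Finset.sum_const, Finset.card_univ,
    Fintype.card_fin, nsmul_eq_mul]
  ring

/-- One-sided key estimate. -/
lemma penalized_key {k : ℕ} (hk1 : 1 ≤ k)
    (D : Set (EuclideanSpace ℝ (Fin k))) (hDo : IsOpen D) (hDb : Bornology.IsBounded D)
    (f : EuclideanSpace ℝ (Fin k) → ℝ → ℝ) (hfm : ∀ x ∈ D, Monotone (f x))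
    (h₁ h₂ : EuclideanSpace ℝ (Fin k) → ℝ) (ε δ : ℝ) (hε : 0 < ε) (hδ : 0 < δ)
    (v v' z z' : EuclideanSpace ℝ (Fin k) → ℝ)
    (hvc : ContinuousOn v (closure D)) (hv'c : ContinuousOn v' (closure D))
    (hz : IsPenalizedSolution D f h₁ h₂ ε δ v z)
    (hz' : IsPenalizedSolution D f h₁ h₂ ε δ v' z')
    {x₀ : EuclideanSpace ℝ (Fin k)} (hx₀ : x₀ ∈ D) :
    z x₀ - z' x₀ ≤ ⨆ x : D, |v x - v' x| := by
  obtain ⟨hzc, hz2, hz0, hzE⟩ := hz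
  obtain ⟨hz'c, hz'2, hz'0, hz'E⟩ := hz'
  by_contra hcon
  push_neg at hcon
  set A := ⨆ x : D, |v x - v' x| with hA
  have hKc : IsCompact (closure D) := hDb.isCompact_closure
  have hbdd : BddAbove (Set.range fun x : D => |v ↑x - v' ↑x|) := by
    have h2 : BddAbove ((fun x => |v x - v' x|) '' closure D) :=
      hKc.bddAbove_image ((hvc.sub hv'c).abs)
    apply BddAbove.mono _ h2
    rintro _ ⟨⟨x, hx⟩, rfl⟩
    exact ⟨x, subset_closure hx, rfl⟩
  have hAx : ∀ x ∈ D, |v x - v' x| ≤ A := fun x hx => le_ciSup hbdd ⟨x, hx⟩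
  have hA0 : 0 ≤ A := le_trans (abs_nonneg _) (hAx x₀ hx₀)
  set q : EuclideanSpace ℝ (Fin k) → ℝ := fun w => ∑ j, (w j)^2 with hq
  have hqc : Continuous q := q_contDiff.continuous
  have hq0 : ∀ w, 0 ≤ q w := fun w => Finset.sum_nonneg fun j _ => sq_nonneg _
  obtain ⟨R, hR⟩ := hKc.bddAbove_image hqc.continuousOn
  have hqR : ∀ x ∈ closure D, q x ≤ R := fun x hx => hR ⟨x, hx, rfl⟩
  have hR0 : 0 ≤ R := le_trans (hq0 x₀) (hqR x₀ (subset_closure hx₀))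
  set G := z x₀ - z' x₀ - A with hG
  have hGpos : 0 < G := by simp only [hG]; linarith
  set σ := G / (2 * (R + 1)) with hσdef
  have hσ : 0 < σ := div_pos hGpos (by linarith)
  have hσR : σ * (R + 1) = G / 2 := by
    rw [hσdef, div_mul_eq_mul_div, div_eq_div_iff (ne_of_gt (by linarith)) (by norm_num)]
    ring
  set φ : EuclideanSpace ℝ (Fin k) → ℝ := fun y => z y - z' y + σ * q y with hφ
  have hφc : ContinuousOn φ (closure D) :=
    (hzc.sub hz'c).add ((continuous_const.mul hqc).continuousOn)
  obtain ⟨y, hyK, hymax⟩ := hKc.exists_isMaxOn ⟨x₀, subset_closure hx₀⟩ hφc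
  have hφx₀ : φ x₀ ≤ φ y := hymax (subset_closure hx₀)
  have hqyR : q y ≤ R := hqR y hyK
  have hσq : σ * q y ≤ σ * R := mul_le_mul_of_nonneg_left hqyR hσ.le
  have hσR' : σ * R < G / 2 := by
    have : σ * R < σ * (R + 1) := by nlinarith
    linarith [hσR]
  have hwy : A < z y - z' y := by
    have h1 : z x₀ - z' x₀ ≤ φ x₀ := by
      have := mul_nonneg hσ.le (hq0 x₀)
      simp only [hφ]; linarith
    have h2 : z y - z' y = φ y - σ * q y := by simp only [hφ]; ring
    have h3 : z x₀ - z' x₀ = A + G := by simp only [hG]; ring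
    linarith
  have hyD : y ∈ D := by
    by_contra hyD'
    have hyF : y ∈ frontier D := by
      rw [hDo.frontier_eq]
      exact ⟨hyK, hyD'⟩
    have := hz0 y hyF
    have := hz'0 y hyF
    linarith [hwy]
  have hlocmax : IsLocalMax φ y := by
    filter_upwards [hDo.mem_nhds hyD] with t ht using hymax (subset_closure ht)
  have hφ2 : ∀ t ∈ D, ContDiffAt ℝ 2 φ t := fun t ht =>
    ((hz2 t ht).sub (hz'2 t ht)).add (contDiffAt_const.mul q_contDiff.contDiffAt)
  have hnonpos : lap φ y ≤ 0 := lap_nonpos_of_isLocalMax hDo hyD hφ2 hlocmax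
  have heq : lap φ y = lap z y - lap z' y + σ * (2 * k) := lap_comb hDo hz2 hz'2 hyD
  -- PDE comparison at y
  have hu : z' y + v' y ≤ z y + v y := by
    have h1 : |v y - v' y| ≤ A := hAx y hyD
    have h2 : -(v y - v' y) ≤ |v y - v' y| := neg_le_abs _
    linarith
  have hfle : f y (z' y + v' y) ≤ f y (z y + v y) := hfm y hyD hu
  have hm1 : max (-(z y + v y - h₁ y)) 0 ≤ max (-(z' y + v' y - h₁ y)) 0 :=
    max_le_max (by linarith) le_rfl
  have hm2 : max (z' y + v' y - h₂ y) 0 ≤ max (z y + v y - h₂ y) 0 :=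
    max_le_max (by linarith) le_rfl
  have hp1 : (1/δ) * max (-(z y + v y - h₁ y)) 0 ≤ (1/δ) * max (-(z' y + v' y - h₁ y)) 0 :=
    mul_le_mul_of_nonneg_left hm1 (by positivity)
  have hp2 : (1/ε) * max (z' y + v' y - h₂ y) 0 ≤ (1/ε) * max (z y + v y - h₂ y) 0 :=
    mul_le_mul_of_nonneg_left hm2 (by positivity)
  have hE1 := hzE y hyD
  have hE2 := hz'E y hyD
  have hlapge : 0 ≤ lap z y - lap z' y := by linarith
  have hkpos : (0:ℝ) < (k:ℝ) := by exact_mod_cast Nat.pos_of_ne_zero (by omega)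
  have hfinal : 0 < σ * (2 * k) := by positivity
  linarith
/-- contraction property of the doubly penalized equation. -/
theorem penalized_contraction {k : ℕ} (hk : k = 1 ∨ k = 2 ∨ k = 3)
    (D : Set (EuclideanSpace ℝ (Fin k))) (hDo : IsOpen D) (hDb : Bornology.IsBounded D)
    (f : EuclideanSpace ℝ (Fin k) → ℝ → ℝ) (hf : SatisfiesF1 D f)
    (h₁ h₂ : EuclideanSpace ℝ (Fin k) → ℝ)
    (hh₁ : ContinuousOn h₁ (closure D)) (hh₂ : ContinuousOn h₂ (closure D))
    (ε δ : ℝ) (hε : 0 < ε) (hδ : 0 < δ)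
    (v v' : EuclideanSpace ℝ (Fin k) → ℝ)
    (hv : ContinuousOn v (closure D)) (hv' : ContinuousOn v' (closure D))
    (hv0 : ∀ x ∈ frontier D, v x = 0) (hv'0 : ∀ x ∈ frontier D, v' x = 0)
    (z z' : EuclideanSpace ℝ (Fin k) → ℝ)
    (hz : IsPenalizedSolution D f h₁ h₂ ε δ v z)
    (hz' : IsPenalizedSolution D f h₁ h₂ ε δ v' z') :
    (⨆ x : D, |z x - z' x|) ≤ ⨆ x : D, |v x - v' x| := by
  have hk1 : 1 ≤ k := by rcases hk with h | h | h <;> omega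
  have hfm := hf.2.2
  have hsymm : (⨆ x : D, |v' ↑x - v ↑x|) = ⨆ x : D, |v ↑x - v' ↑x| :=
    iSup_congr fun x => abs_sub_comm _ _
  refine Real.iSup_le (fun x => ?_) (Real.iSup_nonneg fun x => abs_nonneg _)
  obtain ⟨x, hx⟩ := x
  have hle1 := penalized_key hk1 D hDo hDb f hfm h₁ h₂ ε δ hε hδ v v' z z' hv hv' hz hz' hx
  have hle2 := penalized_key hk1 D hDo hDb f hfm h₁ h₂ ε δ hε hδ v' v z' z hv' hv hz' hz hx
  rw [hsymm] at hle2
  exact abs_sub_le_iff.2 ⟨hle1, hle2⟩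
end

section
/- Uniqueness for the doubly penalized equation: fix ε, δ > 0 and let v : D̄ → ℝ be continuous with v = 0 on ∂D. Then the penalized problem with data v has at most one classical solution: if z and ẑ are both classical solutions of the penalized problem with data v, then z = ẑ on D̄. -/
open MeasureTheory Set

section Aux

open Filter Topology

lemma diffAt_fderiv_apply {E : Type*} [NormedAddCommGroup E] [NormedSpace ℝ E]
    {φ : E → ℝ} {x : E} (hφ : ContDiffAt ℝ 2 φ x) (e : E) :
    DifferentiableAt ℝ (fun y => fderiv ℝ φ y e) x := by
  have hdF : DifferentiableAt ℝ (fderiv ℝ φ) x :=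
    (hφ.fderiv_right (m := 1) (by norm_num)).differentiableAt one_ne_zero
  have := (ContinuousLinearMap.apply ℝ ℝ e).differentiableAt.comp x hdF
  exact this

lemma second_deriv_test {E : Type*} [NormedAddCommGroup E] [NormedSpace ℝ E]
    {φ : E → ℝ} {x : E} (hφ : ContDiffAt ℝ 2 φ x) (hmax : IsLocalMax φ x) (e : E) :
    fderiv ℝ (fun y => fderiv ℝ φ y e) x e ≤ 0 := by
  by_contra hA'
  push_neg at hA'
  set ψ : E → ℝ := fun y => fderiv ℝ φ y e with hψdef
  set A : ℝ := fderiv ℝ ψ x e with hAdef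
  have hA : 0 < A := hA'
  have hψ : DifferentiableAt ℝ ψ x := diffAt_fderiv_apply hφ e
  have hline : ∀ t : ℝ, HasDerivAt (fun s : ℝ => x + s • e) e t := fun t => by
    simpa using ((hasDerivAt_id t).smul_const e).const_add x
  set q : ℝ → ℝ := fun t => ψ (x + t • e) with hqdef
  have h0 : x + (0:ℝ) • e = x := by simp
  have hq : HasDerivAt q A 0 := by
    have hψ' : HasFDerivAt ψ (fderiv ℝ ψ x) (x + (0:ℝ) • e) := by
      rw [h0]; exact hψ.hasFDerivAt
    have := hψ'.comp_hasDerivAt 0 (hline 0)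
    exact this
  have hq0 : q 0 = 0 := by
    simp [hqdef, hψdef, hmax.fderiv_eq_zero]
  have hev : ∀ᶠ t in 𝓝[>] (0:ℝ), 0 < q t := by
    have h1 : Tendsto (slope q 0) (𝓝[≠] (0:ℝ)) (𝓝 A) := hasDerivAt_iff_tendsto_slope.1 hq
    have h2 : Tendsto (slope q 0) (𝓝[>] (0:ℝ)) (𝓝 A) :=
      h1.mono_left (nhdsWithin_mono _ (fun t ht => ne_of_gt ht))
    have h3 : ∀ᶠ t in 𝓝[>] (0:ℝ), 0 < slope q 0 t := h2.eventually (eventually_gt_nhds hA)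
    filter_upwards [h3, self_mem_nhdsWithin] with t hts ht
    have hst : slope q 0 t = q t / t := by simp [slope_def_field, hq0]
    rw [hst] at hts
    have ht' : (0:ℝ) < t := ht
    calc (0:ℝ) = (q t / t) * 0 := by ring
    _ < (q t / t) * t := mul_lt_mul_of_pos_left ht' hts
    _ = q t := div_mul_cancel₀ _ (ne_of_gt ht')
  obtain ⟨u, hu0, hu⟩ := mem_nhdsGT_iff_exists_Ioo_subset.1 hev
  have hu0' : (0:ℝ) < u := mem_Ioi.1 hu0
  have hS : {t : ℝ | DifferentiableAt ℝ φ (x + t • e) ∧ φ (x + t • e) ≤ φ x} ∈ 𝓝 (0:ℝ) := by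
    have hd : ∀ᶠ y in 𝓝 x, DifferentiableAt ℝ φ y :=
      (hφ.eventually (by simp)).mono fun y hy => hy.differentiableAt (by norm_num)
    have hc : Continuous (fun t : ℝ => x + t • e) := by continuity
    have hpre : Tendsto (fun t : ℝ => x + t • e) (𝓝 0) (𝓝 x) := by
      simpa using hc.tendsto 0
    exact hpre.eventually (hd.and hmax)
  obtain ⟨r1, hr1pos, hr1⟩ := Metric.mem_nhds_iff.1 hS
  set c : ℝ := min r1 u / 2 with hcdef
  have hm : 0 < min r1 u := lt_min hr1pos hu0'
  have hcpos : 0 < c := by positivity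
  have hcr1 : c < r1 := by
    have h1 := min_le_left r1 u; rw [hcdef]; linarith
  have hcu : c < u := by
    have h1 := min_le_right r1 u; rw [hcdef]; linarith
  have hsub : Icc (0:ℝ) c ⊆ {t | DifferentiableAt ℝ φ (x + t • e) ∧ φ (x + t • e) ≤ φ x} := by
    intro t ht
    apply hr1
    have : |t| < r1 := by
      rw [abs_lt]; constructor <;> [linarith [ht.1]; linarith [ht.2]]
    simpa [Metric.mem_ball, Real.dist_eq] using this
  set g : ℝ → ℝ := fun t => φ (x + t • e) with hgdef
  have hderiv : ∀ t ∈ Icc (0:ℝ) c, HasDerivAt g (q t) t := by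
    intro t ht
    have hd := (hsub ht).1
    have := (hd.hasFDerivAt).comp_hasDerivAt t (hline t)
    exact this
  have contg : ContinuousOn g (Icc 0 c) :=
    fun t ht => (hderiv t ht).continuousAt.continuousWithinAt
  have hmono : StrictMonoOn g (Icc 0 c) := by
    apply strictMonoOn_of_deriv_pos (convex_Icc 0 c) contg
    intro t ht
    rw [interior_Icc] at ht
    rw [(hderiv t (Ioo_subset_Icc_self ht)).deriv]
    exact hu ⟨ht.1, lt_trans ht.2 hcu⟩
  have hlt : g 0 < g c :=
    hmono (left_mem_Icc.2 hcpos.le) (right_mem_Icc.2 hcpos.le) hcpos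
  have hg0 : g 0 = φ x := by simp [hgdef]
  have hgc : g c ≤ φ x := (hsub (right_mem_Icc.2 hcpos.le)).2
  rw [hg0] at hlt
  linarith

lemma D2_sub {E : Type*} [NormedAddCommGroup E] [NormedSpace ℝ E]
    {φ χ : E → ℝ} {x : E} (hφ : ContDiffAt ℝ 2 φ x) (hχ : ContDiffAt ℝ 2 χ x) (e : E) :
    fderiv ℝ (fun y => fderiv ℝ (fun p => φ p - χ p) y e) x e
      = fderiv ℝ (fun y => fderiv ℝ φ y e) x e - fderiv ℝ (fun y => fderiv ℝ χ y e) x e := by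
  have hev : (fun y => fderiv ℝ (fun p => φ p - χ p) y e)
      =ᶠ[𝓝 x] fun y => fderiv ℝ φ y e - fderiv ℝ χ y e := by
    filter_upwards [hφ.eventually (by simp), hχ.eventually (by simp)] with y h1 h2
    rw [fderiv_fun_sub (h1.differentiableAt (by norm_num)) (h2.differentiableAt (by norm_num))]
    rfl
  rw [hev.fderiv_eq, fderiv_fun_sub (diffAt_fderiv_apply hφ e) (diffAt_fderiv_apply hχ e)]
  rfl

lemma D2_add {E : Type*} [NormedAddCommGroup E] [NormedSpace ℝ E]
    {φ χ : E → ℝ} {x : E} (hφ : ContDiffAt ℝ 2 φ x) (hχ : ContDiffAt ℝ 2 χ x) (e : E) :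
    fderiv ℝ (fun y => fderiv ℝ (fun p => φ p + χ p) y e) x e
      = fderiv ℝ (fun y => fderiv ℝ φ y e) x e + fderiv ℝ (fun y => fderiv ℝ χ y e) x e := by
  have hev : (fun y => fderiv ℝ (fun p => φ p + χ p) y e)
      =ᶠ[𝓝 x] fun y => fderiv ℝ φ y e + fderiv ℝ χ y e := by
    filter_upwards [hφ.eventually (by simp), hχ.eventually (by simp)] with y h1 h2
    rw [fderiv_fun_add (h1.differentiableAt (by norm_num)) (h2.differentiableAt (by norm_num))]
    rfl
  rw [hev.fderiv_eq, fderiv_fun_add (diffAt_fderiv_apply hφ e) (diffAt_fderiv_apply hχ e)]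
  rfl

lemma lap_sub {k : ℕ} {φ χ : EuclideanSpace ℝ (Fin k) → ℝ} {x : EuclideanSpace ℝ (Fin k)}
    (hφ : ContDiffAt ℝ 2 φ x) (hχ : ContDiffAt ℝ 2 χ x) :
    lap (fun p => φ p - χ p) x = lap φ x - lap χ x := by
  unfold lap
  rw [← Finset.sum_sub_distrib]
  exact Finset.sum_congr rfl fun i _ => D2_sub hφ hχ _

lemma lap_add {k : ℕ} {φ χ : EuclideanSpace ℝ (Fin k) → ℝ} {x : EuclideanSpace ℝ (Fin k)}
    (hφ : ContDiffAt ℝ 2 φ x) (hχ : ContDiffAt ℝ 2 χ x) :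
    lap (fun p => φ p + χ p) x = lap φ x + lap χ x := by
  unfold lap
  rw [← Finset.sum_add_distrib]
  exact Finset.sum_congr rfl fun i _ => D2_add hφ hχ _

lemma lap_nonpos_of_localMax {k : ℕ} {φ : EuclideanSpace ℝ (Fin k) → ℝ}
    {x : EuclideanSpace ℝ (Fin k)} (hφ : ContDiffAt ℝ 2 φ x) (hmax : IsLocalMax φ x) :
    lap φ x ≤ 0 :=
  Finset.sum_nonpos fun _ _ => second_deriv_test hφ hmax _

lemma lap_exp {k : ℕ} (η : ℝ) (i₀ : Fin k) (x : EuclideanSpace ℝ (Fin k)) :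
    lap (fun p => η * Real.exp (p i₀)) x = η * Real.exp (x i₀) := by
  have hfd : ∀ y : EuclideanSpace ℝ (Fin k),
      HasFDerivAt (fun p : EuclideanSpace ℝ (Fin k) => η * Real.exp (p i₀))
        ((η * Real.exp (y i₀)) • (EuclideanSpace.proj i₀ : EuclideanSpace ℝ (Fin k) →L[ℝ] ℝ)) y := by
    intro y
    have h1 : HasFDerivAt (fun p : EuclideanSpace ℝ (Fin k) => Real.exp (p i₀))
        (Real.exp (y i₀) • (EuclideanSpace.proj i₀ : EuclideanSpace ℝ (Fin k) →L[ℝ] ℝ)) y := by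
      have hp : HasFDerivAt (fun p : EuclideanSpace ℝ (Fin k) => p i₀)
          (EuclideanSpace.proj i₀ : EuclideanSpace ℝ (Fin k) →L[ℝ] ℝ) y :=
        (EuclideanSpace.proj i₀ : EuclideanSpace ℝ (Fin k) →L[ℝ] ℝ).hasFDerivAt
      exact (Real.hasDerivAt_exp (y i₀)).comp_hasFDerivAt y hp
    have := h1.const_mul η
    simpa [smul_smul] using this
  unfold lap
  have key : ∀ i : Fin k,
      fderiv ℝ (fun y => fderiv ℝ (fun p => η * Real.exp (p i₀)) y (EuclideanSpace.single i 1)) x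
        (EuclideanSpace.single i 1)
      = η * Real.exp (x i₀) * (EuclideanSpace.single i (1:ℝ) i₀) * (EuclideanSpace.single i (1:ℝ) i₀) := by
    intro i
    have heq : (fun y => fderiv ℝ (fun p => η * Real.exp (p i₀)) y (EuclideanSpace.single i 1))
        = fun y => (η * EuclideanSpace.single i (1:ℝ) i₀) * Real.exp (y i₀) := by
      funext y
      rw [(hfd y).fderiv]
      simp only [ContinuousLinearMap.coe_smul', Pi.smul_apply, PiLp.proj_apply, smul_eq_mul]
      ring
    rw [heq]
    have h3 : HasFDerivAt (fun y : EuclideanSpace ℝ (Fin k) => (η * EuclideanSpace.single i (1:ℝ) i₀) * Real.exp (y i₀))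
        (((η * EuclideanSpace.single i (1:ℝ) i₀) * Real.exp (x i₀)) • (EuclideanSpace.proj i₀ : EuclideanSpace ℝ (Fin k) →L[ℝ] ℝ)) x := by
      have h1 : HasFDerivAt (fun p : EuclideanSpace ℝ (Fin k) => Real.exp (p i₀))
          (Real.exp (x i₀) • (EuclideanSpace.proj i₀ : EuclideanSpace ℝ (Fin k) →L[ℝ] ℝ)) x := by
        have hp : HasFDerivAt (fun p : EuclideanSpace ℝ (Fin k) => p i₀)
            (EuclideanSpace.proj i₀ : EuclideanSpace ℝ (Fin k) →L[ℝ] ℝ) x :=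
          (EuclideanSpace.proj i₀ : EuclideanSpace ℝ (Fin k) →L[ℝ] ℝ).hasFDerivAt
        exact (Real.hasDerivAt_exp (x i₀)).comp_hasFDerivAt x hp
      simpa [smul_smul] using h1.const_mul (η * EuclideanSpace.single i (1:ℝ) i₀)
    rw [h3.fderiv]
    simp only [ContinuousLinearMap.coe_smul', Pi.smul_apply, PiLp.proj_apply, smul_eq_mul]
    ring
  rw [Finset.sum_congr rfl fun i _ => key i]
  have h4 : ∀ i : Fin k, η * Real.exp (x i₀) * (EuclideanSpace.single i (1:ℝ) i₀) * (EuclideanSpace.single i (1:ℝ) i₀)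
      = if i₀ = i then η * Real.exp (x i₀) else 0 := by
    intro i
    rw [EuclideanSpace.single_apply]
    by_cases h : i₀ = i <;> simp [h]
  rw [Finset.sum_congr rfl fun i _ => h4 i, Finset.sum_ite_eq]
  simp

/-- One-sided comparison for the penalized problem. -/
lemma penalized_le {k : ℕ} (hk : k ≠ 0)
    (D : Set (EuclideanSpace ℝ (Fin k))) (hDo : IsOpen D) (hDb : Bornology.IsBounded D)
    (f : EuclideanSpace ℝ (Fin k) → ℝ → ℝ) (hfmono : ∀ x ∈ D, Monotone (f x))
    (h₁ h₂ : EuclideanSpace ℝ (Fin k) → ℝ)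
    (ε δ : ℝ) (hε : 0 < ε) (hδ : 0 < δ)
    (v : EuclideanSpace ℝ (Fin k) → ℝ)
    (z z' : EuclideanSpace ℝ (Fin k) → ℝ)
    (hz : IsPenalizedSolution D f h₁ h₂ ε δ v z)
    (hz' : IsPenalizedSolution D f h₁ h₂ ε δ v z') :
    ∀ x ∈ closure D, z x ≤ z' x := by
  obtain ⟨hzc, hz2, hzb, hzE⟩ := hz
  obtain ⟨hzc', hz2', hzb', hzE'⟩ := hz'
  intro x hx
  by_contra hcon
  push_neg at hcon
  set w : EuclideanSpace ℝ (Fin k) → ℝ := fun p => z p - z' p with hwdef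
  have hwc : ContinuousOn w (closure D) := hzc.sub hzc'
  have hcompact : IsCompact (closure D) := hDb.isCompact_closure
  obtain ⟨x₀, hx₀mem, hx₀max⟩ := hcompact.exists_isMaxOn ⟨x, hx⟩ hwc
  set m : ℝ := w x₀ with hmdef
  have hm : 0 < m := by
    have h1 : w x ≤ w x₀ := hx₀max hx
    have h2 : 0 < w x := by simp only [hwdef]; linarith
    linarith
  have hx₀D : x₀ ∈ D := by
    by_contra hnd
    have hfr : x₀ ∈ frontier D := ⟨hx₀mem, by rwa [hDo.interior_eq]⟩
    have h1 := hzb x₀ hfr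
    have h2 := hzb' x₀ hfr
    have : m = 0 := by simp [hmdef, hwdef, h1, h2]
    linarith
  have hwD : ∀ p ∈ D, ContDiffAt ℝ 2 w p := fun p hp => (hz2 p hp).sub (hz2' p hp)
  have hwcont : ∀ p ∈ D, ContinuousAt w p := fun p hp => (hwD p hp).continuousAt
  clear_value w m
  set U : Set (EuclideanSpace ℝ (Fin k)) := {p | p ∈ D ∧ m/2 < w p} with hUdef
  have hUopen : IsOpen U := by
    rw [isOpen_iff_mem_nhds]
    rintro p ⟨hpD, hpw⟩
    have h1 : ∀ᶠ q in nhds p, m/2 < w q :=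
      (hwcont p hpD).eventually (eventually_gt_nhds hpw)
    filter_upwards [h1, hDo.mem_nhds hpD] with q h1 h2
    exact ⟨h2, h1⟩
  have hx₀U : x₀ ∈ U := ⟨hx₀D, by rw [← hmdef]; linarith⟩
  have hUD : U ⊆ D := fun p hp => hp.1
  have hclU : closure U ⊆ closure D := closure_mono hUD
  have hKcomp : IsCompact (closure U) := hcompact.of_isClosed_subset isClosed_closure hclU
  have hC : IsClosed (closure D ∩ w ⁻¹' Ici (m/2)) :=
    hwc.preimage_isClosed_of_isClosed isClosed_closure isClosed_Ici
  have hUC : U ⊆ closure D ∩ w ⁻¹' Ici (m/2) :=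
    fun p hp => ⟨subset_closure (hUD hp), le_of_lt hp.2⟩
  have hclUC : closure U ⊆ closure D ∩ w ⁻¹' Ici (m/2) := closure_minimal hUC hC
  have hKD : closure U ⊆ D := by
    intro p hp
    rcases hclUC hp with ⟨hpcl, hpw⟩
    by_contra hnd
    have hfr : p ∈ frontier D := ⟨hpcl, by rwa [hDo.interior_eq]⟩
    have h1 := hzb p hfr
    have h2 := hzb' p hfr
    have h3 : w p = 0 := by simp [hwdef, h1, h2]
    rw [mem_preimage, mem_Ici, h3] at hpw
    linarith
  obtain ⟨R, hR⟩ := hDb.closure.exists_norm_le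
  have hk' : 0 < k := Nat.pos_of_ne_zero hk
  set i₀ : Fin k := ⟨0, hk'⟩ with hi₀def
  have hcoord : ∀ p : EuclideanSpace ℝ (Fin k), p i₀ ≤ ‖p‖ := by
    intro p
    have h1 : |p i₀| ≤ ‖p‖ := by
      rw [EuclideanSpace.norm_eq]
      have h2 : |p i₀| = Real.sqrt (‖p i₀‖^2) := by
        rw [Real.norm_eq_abs, Real.sqrt_sq_eq_abs, abs_abs]
      rw [h2]
      apply Real.sqrt_le_sqrt
      exact Finset.single_le_sum (f := fun i => ‖p i‖^2) (fun i _ => by positivity) (Finset.mem_univ i₀)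
    linarith [le_abs_self (p i₀)]
  set C : ℝ := Real.exp R with hCdef
  have hCpos : 0 < C := Real.exp_pos R
  have hexp_le : ∀ p ∈ closure D, Real.exp (p i₀) ≤ C :=
    fun p hp => Real.exp_le_exp.2 ((hcoord p).trans (hR p hp))
  set η : ℝ := m / (4 * C) with hηdef
  have hηpos : 0 < η := by positivity
  set wη : EuclideanSpace ℝ (Fin k) → ℝ := fun p => w p + η * Real.exp (p i₀) with hwηdef
  have hηbound : ∀ p ∈ closure D, η * Real.exp (p i₀) ≤ m/4 := by
    intro p hp
    have h1 := hexp_le p hp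
    have h2 : η * Real.exp (p i₀) ≤ η * C :=
      mul_le_mul_of_nonneg_left h1 hηpos.le
    have h3 : η * C = m/4 := by
      rw [hηdef]; field_simp
    linarith
  clear_value C η
  have hexpcont : Continuous (fun p : EuclideanSpace ℝ (Fin k) => η * Real.exp (p i₀)) := by
    exact continuous_const.mul (Real.continuous_exp.comp
      (EuclideanSpace.proj i₀ : EuclideanSpace ℝ (Fin k) →L[ℝ] ℝ).continuous)
  have hwηcont : ContinuousOn wη (closure U) :=
    (hwc.mono hclU).add hexpcont.continuousOn
  obtain ⟨y, hyK, hymax⟩ := hKcomp.exists_isMaxOn ⟨x₀, subset_closure hx₀U⟩ hwηcont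
  have hyU : y ∈ U := by
    by_contra hyUn
    have hyD : y ∈ D := hKD hyK
    have hywle : w y ≤ m/2 := by
      by_contra h
      push_neg at h
      exact hyUn ⟨hyD, h⟩
    have h1 : wη x₀ ≤ wη y := hymax (subset_closure hx₀U)
    have h3 : 0 < Real.exp (x₀ i₀) := Real.exp_pos _
    have h4 : η * Real.exp (y i₀) ≤ m/4 := hηbound y (hclU hyK)
    have h5 : 0 < η * Real.exp (x₀ i₀) := by positivity
    have h6 : wη x₀ = m + η * Real.exp (x₀ i₀) := by simp only [hwηdef, hmdef]
    have h7 : wη y = w y + η * Real.exp (y i₀) := by simp only [hwηdef]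
    rw [h6, h7] at h1
    linarith
  have hyD : y ∈ D := hUD hyU
  have hlocal : IsLocalMax wη y := by
    filter_upwards [hUopen.mem_nhds hyU] with p hp
    exact hymax (subset_closure hp)
  have hexpcd : ContDiff ℝ 2 (fun p : EuclideanSpace ℝ (Fin k) => η * Real.exp (p i₀)) :=
    contDiff_const.mul (Real.contDiff_exp.comp
      (EuclideanSpace.proj i₀ : EuclideanSpace ℝ (Fin k) →L[ℝ] ℝ).contDiff)
  have hwη2 : ContDiffAt ℝ 2 wη y := by
    rw [hwηdef]; exact (hwD y hyD).add hexpcd.contDiffAt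
  have hlapneg : lap wη y ≤ 0 := lap_nonpos_of_localMax hwη2 hlocal
  have hlapsplit : lap wη y = lap w y + η * Real.exp (y i₀) := by
    rw [hwηdef, lap_add (hwD y hyD) hexpcd.contDiffAt, lap_exp]
  have hwpos : z' y < z y := by
    have h1 := hyU.2
    have h2 : m/2 < w y := h1
    simp only [hwdef] at h2
    linarith
  have e1 := hzE y hyD
  have e2 := hzE' y hyD
  have hf1 : f y (z' y + v y) ≤ f y (z y + v y) := hfmono y hyD (by linarith)
  have hneg : max (-(z y + v y - h₁ y)) 0 ≤ max (-(z' y + v y - h₁ y)) 0 :=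
    max_le_max (by linarith) le_rfl
  have hpos2 : max (z' y + v y - h₂ y) 0 ≤ max (z y + v y - h₂ y) 0 :=
    max_le_max (by linarith) le_rfl
  have c1 : (1/δ) * max (-(z y + v y - h₁ y)) 0 ≤ (1/δ) * max (-(z' y + v y - h₁ y)) 0 :=
    mul_le_mul_of_nonneg_left hneg (by positivity)
  have c2 : (1/ε) * max (z' y + v y - h₂ y) 0 ≤ (1/ε) * max (z y + v y - h₂ y) 0 :=
    mul_le_mul_of_nonneg_left hpos2 (by positivity)
  have hlapw : lap w y = lap z y - lap z' y := by
    rw [hwdef]; exact lap_sub (hz2 y hyD) (hz2' y hyD)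
  have hlapwpos : 0 ≤ lap w y := by
    rw [hlapw]
    linarith
  have hfinal : 0 < lap wη y := by
    rw [hlapsplit]
    have : 0 < η * Real.exp (y i₀) := by positivity
    linarith
  linarith

end Aux

/-- uniqueness for the doubly penalized equation. -/
theorem penalized_uniqueness {k : ℕ} (hk : k = 1 ∨ k = 2 ∨ k = 3)
    (D : Set (EuclideanSpace ℝ (Fin k))) (hDo : IsOpen D) (hDb : Bornology.IsBounded D)
    (f : EuclideanSpace ℝ (Fin k) → ℝ → ℝ) (hf : SatisfiesF1 D f)
    (h₁ h₂ : EuclideanSpace ℝ (Fin k) → ℝ)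
    (hh₁ : ContinuousOn h₁ (closure D)) (hh₂ : ContinuousOn h₂ (closure D))
    (ε δ : ℝ) (hε : 0 < ε) (hδ : 0 < δ)
    (v : EuclideanSpace ℝ (Fin k) → ℝ)
    (hv : ContinuousOn v (closure D)) (hv0 : ∀ x ∈ frontier D, v x = 0)
    (z z' : EuclideanSpace ℝ (Fin k) → ℝ)
    (hz : IsPenalizedSolution D f h₁ h₂ ε δ v z)
    (hz' : IsPenalizedSolution D f h₁ h₂ ε δ v z') :
    ∀ x ∈ closure D, z x = z' x := by
  have hk' : k ≠ 0 := by rcases hk with h | h | h <;> omega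
  intro x hx
  exact le_antisymm
    (penalized_le hk' D hDo hDb f hf.2.2 h₁ h₂ ε δ hε hδ v z z' hz hz' x hx)
    (penalized_le hk' D hDo hDb f hf.2.2 h₁ h₂ ε δ hε hδ v z' z hz' hz x hx)
end
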